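/- Let κ be a regular uncountable cardinal, let C be a club in κ, and let u and v be the diagonal unitaries on ℓ²(κ) with diagonals f, g : κ → 𝕋 respectively. Then the following are equivalent: (a) for every x ∈ D[C], u x u* − v x v* ∈ J_κ (i.e., Ad u and Ad v agree on D[C] modulo J_κ); (b) there exists ε < κ such that for every δ ∈ C with δ ≥ ε, the function ξ ↦ f(ξ)·conj(g(ξ)) is constant on the interval [δ, succ_C(δ)). -/

import Mathlib

noncomputable section

open Set

/-- The Hilbert space ℓ²(o): square-summable families indexed by the ordinals below `o`. -/
abbrev L2 (o : Ordinal) : Type := ↥(lp (fun _ : o.ToType => ℂ) 2)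

/-- Bounded linear operators on ℓ²(o). -/
abbrev Bd (o : Ordinal) : Type := L2 o →L[ℂ] L2 o

/-- The ordinal (below `o`) corresponding to an index `i` of ℓ²(o). -/
def ordOf {o : Ordinal} (i : o.ToType) : Ordinal := ((Ordinal.ToType.mk (o := o)).symm i : Ordinal)

/-- `InvOn o S x` : the closed subspace of ℓ²(o) of functions supported on `S`
is an invariant subspace of `x`. -/
def InvOn (o : Ordinal) (S : Set Ordinal) (x : Bd o) : Prop :=
  ∀ f : L2 o, (∀ i : o.ToType, ordOf i ∉ S → f i = 0) →
    ∀ i : o.ToType, ordOf i ∉ S → x f i = 0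

/-- `Dclub o C` (the algebra `D[C]`) is the set of bounded operators `x` on ℓ²(o) such
that for every `α ∈ C`, ℓ²(α) is an invariant subspace of both `x` and its adjoint. -/
def Dclub (o : Ordinal) (C : Set Ordinal) : Set (Bd o) :=
  {x | ∀ α ∈ C, InvOn o (Set.Iio α) x ∧ InvOn o (Set.Iio α) (star x)}

/-- A club in (the ordinal) `o`: a closed unbounded subset of `o`. -/
def IsClubIn (o : Ordinal) (C : Set Ordinal) : Prop :=
  C ⊆ Set.Iio o ∧
  (∀ s ⊆ C, s.Nonempty → sSup s < o → sSup s ∈ C) ∧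
  (∀ α < o, ∃ β ∈ C, α < β)

/-- The least element of `C` strictly above `α`. -/
def clubSucc (C : Set Ordinal) (α : Ordinal) : Ordinal :=
  sInf {β | β ∈ C ∧ α < β}

/-- `memJ κ x` : the (Hilbert space) dimension of the range of `x` is `< κ`;
equivalently (for uncountable κ), the range of `x` is contained in the closure
of a set of cardinality `< κ`. -/
def memJ (κ : Cardinal) {o : Ordinal} (x : Bd o) : Prop :=
  ∃ D : Set (L2 o), Cardinal.mk D < κ ∧ Set.range ⇑x ⊆ closure D

/-- `ConstOn h a b` : the function `h` is constant on the ordinal interval `[a, b)`. -/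
def ConstOn {β : Type*} (h : Ordinal → β) (a b : Ordinal) : Prop :=
  ∀ ξ η : Ordinal, a ≤ ξ → ξ < b → a ≤ η → η < b → h ξ = h η

/-!
Write `h = f · conj g`. Conjugation by a diagonal unitary acts entrywise, so the `(i, j)` entry of
`u x u* - v x v*` is `(f i · conj (f j) - g i · conj (g j)) · x i j`, and for unimodular values the
coefficient vanishes exactly when `h i = h j`. An operator in `D[C]` has nonzero entries only at
pairs `(i, j)` that no point of `C` separates; above `min C` these are the pairs inside one block
`[δ, succ_C δ)`.

If `h` is constant on every block above `ε`, all rows of `u x u* - v x v*` at or beyond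
`succ_C ε` vanish, so its range lies in `ℓ²(succ_C ε)`, which has a dense subset of size `< κ`.
Conversely, if `h` is non-constant on cofinally many blocks, pick `ξ_δ, η_δ` in each of them with
`h ξ_δ ≠ h η_δ`. The partial isometry `e (η_δ) ↦ e (ξ_δ)` lies in `D[C]`, and the range of
`u x u* - v x v*` contains every `e (ξ_δ)`; by regularity there are `κ` of them, pairwise at
distance `√2`, so they are not in the closure of any set of size `< κ`.
-/

open scoped lp ComplexConjugate ENNReal Cardinal

universe u

theorem AddSubmonoid.mk_closure_le {M : Type*} [AddMonoid M] (T : Set M) :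
    #(AddSubmonoid.closure T) ≤ max ℵ₀ #T := by
  rw [← SetLike.coe_sort_coe, AddSubmonoid.closure_eq_mrange, AddMonoidHom.coe_mrange]
  exact Cardinal.mk_range_le.trans (Cardinal.mk_list_le_max T)

theorem Cardinal.mk_le_of_separated_subset_closure {α X : Type u} [PseudoMetricSpace X]
    {D : Set X} {F : α → X} {r : ℝ} (hr : 0 < r) (hF : ∀ a, F a ∈ closure D)
    (hsep : Pairwise fun a b => r ≤ dist (F a) (F b)) : #α ≤ #D := by
  choose p hpD hp using fun a => Metric.mem_closure_iff.1 (hF a) (r / 2) (half_pos hr)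
  refine Cardinal.mk_le_of_injective (f := fun a => (⟨p a, hpD a⟩ : D)) fun a b hab => ?_
  by_contra hne
  have hpab : p a = p b := congrArg Subtype.val hab
  have := dist_triangle_right (F a) (F b) (p a)
  rw [hpab] at this
  linarith [hsep hne, hp a, hp b, hpab ▸ hp a]

theorem Complex.mul_conj_eq_mul_conj_iff {a b c d : ℂ} (hb : ‖b‖ = 1) (hc : ‖c‖ = 1)
    (hd : ‖d‖ = 1) : a * conj b = c * conj d ↔ a * conj c = b * conj d := by
  have hb0 : b ≠ 0 := norm_ne_zero_iff.1 (hb ▸ one_ne_zero)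
  have hc0 : c ≠ 0 := norm_ne_zero_iff.1 (hc ▸ one_ne_zero)
  have hd0 : d ≠ 0 := norm_ne_zero_iff.1 (hd ▸ one_ne_zero)
  rw [← Complex.inv_eq_conj hb, ← Complex.inv_eq_conj hc, ← Complex.inv_eq_conj hd,
    ← div_eq_mul_inv, ← div_eq_mul_inv, ← div_eq_mul_inv, ← div_eq_mul_inv,
    div_eq_div_iff hb0 hd0, div_eq_div_iff hc0 hd0, mul_comm c b]

section MatrixEntries

variable {ι : Type*} [DecidableEq ι]

theorem lp.single_eq_smul_single_one (j : ι) (c : ℂ) :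
    (lp.single 2 j c : ℓ²(ι, ℂ)) = c • lp.single 2 j 1 := by
  rw [← lp.single_smul, smul_eq_mul, mul_one]

theorem lp.one_le_dist_single {i j : ι} (h : i ≠ j) :
    1 ≤ dist (lp.single 2 i 1 : ℓ²(ι, ℂ)) (lp.single 2 j 1) := by
  have := lp.norm_apply_le_norm two_ne_zero (lp.single 2 i 1 - lp.single 2 j 1 : ℓ²(ι, ℂ)) i
  rwa [← dist_eq_norm, lp.coeFn_sub, Pi.sub_apply, lp.single_apply_self,
    lp.single_apply_ne _ _ _ h, sub_zero, norm_one] at this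

theorem lp.hasSum_apply_single_mul (T : ℓ²(ι, ℂ) →L[ℂ] ℓ²(ι, ℂ)) (w : ℓ²(ι, ℂ)) (i : ι) :
    HasSum (fun j => w j * T (lp.single 2 j 1) i) (T w i) := by
  have h := (lp.hasSum_single ENNReal.ofNat_ne_top w).mapL ((lp.evalCLM ℂ _ 2 i).comp T)
  simp only [lp.single_eq_smul_single_one _ (w _), map_smul, smul_eq_mul] at h
  exact h

theorem lp.apply_eq_zero_of_apply_single (T : ℓ²(ι, ℂ) →L[ℂ] ℓ²(ι, ℂ)) (w : ℓ²(ι, ℂ)) (i : ι)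
    (h : ∀ j, w j ≠ 0 → T (lp.single 2 j 1) i = 0) : T w i = 0 := by
  refine (lp.hasSum_apply_single_mul T w i).unique (hasSum_zero.congr_fun fun j => ?_)
  by_cases hj : w j = 0
  · simp [hj]
  · simp [h j hj]

theorem lp.star_apply_single (T : ℓ²(ι, ℂ) →L[ℂ] ℓ²(ι, ℂ)) (i j : ι) :
    star T (lp.single 2 j 1) i = conj (T (lp.single 2 i 1) j) := by
  have key := lp.inner_single_left (G := fun _ : ι => ℂ) (𝕜 := ℂ) i 1 (star T (lp.single 2 j 1))
  rw [ContinuousLinearMap.star_eq_adjoint] at key ⊢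
  rw [ContinuousLinearMap.adjoint_inner_right, ← inner_conj_symm, lp.inner_single_left] at key
  simpa using key.symm

theorem lp.exists_mk_le_subset_closure (s : Set ι) :
    ∃ D : Set ℓ²(ι, ℂ), #D ≤ max ℵ₀ #s ∧ {w : ℓ²(ι, ℂ) | ∀ i ∈ sᶜ, w i = 0} ⊆ closure D := by
  obtain ⟨A, hA, hAdense⟩ := TopologicalSpace.exists_countable_dense ℂ
  set K := AddSubmonoid.closure (⋃ i ∈ s, lp.single (E := fun _ : ι => ℂ) 2 i '' A)
  refine ⟨K, ?_, fun w hw => ?_⟩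
  · have hA' : ∀ i : s, #(lp.single (E := fun _ : ι => ℂ) 2 i '' A) ≤ ℵ₀ :=
      fun _ => (hA.image _).le_aleph0
    calc #K ≤ max ℵ₀ (#s * ℵ₀) := by
          grw [AddSubmonoid.mk_closure_le, Cardinal.mk_biUnion_le, ciSup_le' hA']
      _ ≤ max ℵ₀ #s := max_le (le_max_left _ _)
          ((Cardinal.mul_le_max_of_aleph0_le_right le_rfl).trans_eq (max_comm _ _))
  have hsingle : ∀ i c, (i ∈ s ∨ c = 0) → lp.single 2 i c ∈ closure (K : Set ℓ²(ι, ℂ)) := by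
    rintro i c (hi | rfl)
    · refine closure_mono (subset_trans ?_ AddSubmonoid.subset_closure)
        (mem_closure_image (lp.isometry_single i).continuous.continuousAt (hAdense c))
      exact subset_biUnion_of_mem (u := fun i => lp.single (E := fun _ : ι => ℂ) 2 i '' A) hi
    · rw [lp.single_zero]
      exact subset_closure (zero_mem K)
  rw [← AddSubmonoid.coe_topologicalClosure] at hsingle ⊢
  refine K.isClosed_topologicalClosure.mem_of_tendsto (lp.hasSum_single ENNReal.ofNat_ne_top w)
    (Filter.Eventually.of_forall fun F => sum_mem fun j _ => hsingle j _ ?_)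
  exact (em (j ∈ s)).imp_right (hw j)

end MatrixEntries

section Diagonal

variable {ι : Type*} [DecidableEq ι] {a b : ι → ℂ} {u v : ℓ²(ι, ℂ) →L[ℂ] ℓ²(ι, ℂ)}

theorem lp.apply_single_of_diag (hu : ∀ w i, u w i = a i * w i) (j : ι) :
    u (lp.single 2 j 1) = a j • lp.single 2 j 1 := by
  ext i
  rw [hu, lp.coeFn_smul, Pi.smul_apply, smul_eq_mul, lp.single_apply, Pi.single_apply]
  split_ifs with h <;> simp [h]

theorem lp.star_apply_single_of_diag (hu : ∀ w i, u w i = a i * w i) (j : ι) :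
    star u (lp.single 2 j 1) = conj (a j) • lp.single 2 j 1 := by
  ext i
  rw [lp.star_apply_single, lp.apply_single_of_diag hu, lp.coeFn_smul, lp.coeFn_smul,
    Pi.smul_apply, Pi.smul_apply, lp.single_apply, lp.single_apply, Pi.single_apply,
    Pi.single_apply]
  split_ifs with h h' h' <;> simp_all

theorem lp.conj_diag_apply_single (hu : ∀ w i, u w i = a i * w i)
    (x : ℓ²(ι, ℂ) →L[ℂ] ℓ²(ι, ℂ)) (i j : ι) :
    (u * x * star u) (lp.single 2 j 1) i = a i * conj (a j) * x (lp.single 2 j 1) i := by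
  simp only [mul_apply_eq_comp, lp.star_apply_single_of_diag hu, map_smul, hu,
    lp.coeFn_smul, Pi.smul_apply, smul_eq_mul]
  ring

theorem lp.conj_diag_sub_conj_diag_apply_single (hu : ∀ w i, u w i = a i * w i)
    (hv : ∀ w i, v w i = b i * w i) (x : ℓ²(ι, ℂ) →L[ℂ] ℓ²(ι, ℂ)) (i j : ι) :
    (u * x * star u - v * x * star v) (lp.single 2 j 1) i =
      (a i * conj (a j) - b i * conj (b j)) * x (lp.single 2 j 1) i := by
  rw [sub_apply, lp.coeFn_sub, Pi.sub_apply, lp.conj_diag_apply_single hu,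
    lp.conj_diag_apply_single hv, sub_mul]

theorem lp.conj_diag_sub_conj_diag_single_of_apply_single (hu : ∀ w i, u w i = a i * w i)
    (hv : ∀ w i, v w i = b i * w i) {x : ℓ²(ι, ℂ) →L[ℂ] ℓ²(ι, ℂ)} {i j : ι}
    (hx : x (lp.single 2 j 1) = lp.single 2 i 1) :
    (u * x * star u - v * x * star v) (lp.single 2 j 1) =
      (a i * conj (a j) - b i * conj (b j)) • lp.single 2 i 1 := by
  ext k
  rw [lp.conj_diag_sub_conj_diag_apply_single hu hv, hx, lp.coeFn_smul, Pi.smul_apply,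
    lp.single_apply, Pi.single_apply, smul_eq_mul]
  split_ifs with h
  · rw [h]
  · simp

end Diagonal

section PartialComposition

variable {ι : Type*} [DecidableEq ι] {s : Set ι} {τ : ι → ι}

theorem lp.sum_indicator_comp_le (hτ : s.InjOn τ) (w : ℓ²(ι, ℂ)) (F : Finset ι) :
    ∑ i ∈ F, ‖s.indicator (fun i => w (τ i)) i‖ ^ (2 : ℝ≥0∞).toReal ≤
      ‖w‖ ^ (2 : ℝ≥0∞).toReal := by
  classical
  calc ∑ i ∈ F, ‖s.indicator (fun i => w (τ i)) i‖ ^ (2 : ℝ≥0∞).toReal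
      = ∑ i ∈ F.filter (· ∈ s), ‖w (τ i)‖ ^ (2 : ℝ≥0∞).toReal := by
        rw [Finset.sum_filter]
        refine Finset.sum_congr rfl fun i _ => ?_
        by_cases hi : i ∈ s <;> simp [hi]
    _ = ∑ j ∈ (F.filter (· ∈ s)).image τ, ‖w j‖ ^ (2 : ℝ≥0∞).toReal :=
        (Finset.sum_image (f := fun j => ‖w j‖ ^ (2 : ℝ≥0∞).toReal) fun i hi i' hi' =>
          hτ (Finset.mem_filter.1 hi).2 (Finset.mem_filter.1 hi').2).symm
    _ ≤ ‖w‖ ^ (2 : ℝ≥0∞).toReal := lp.sum_rpow_le_norm_rpow (by norm_num) w _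

variable (s τ) in
noncomputable def lp.indicatorCompCLM (hτ : s.InjOn τ) : ℓ²(ι, ℂ) →L[ℂ] ℓ²(ι, ℂ) :=
  LinearMap.mkContinuous
    { toFun := fun w => ⟨s.indicator fun i => w (τ i), memℓp_gen' (lp.sum_indicator_comp_le hτ w)⟩
      map_add' := fun w z => by
        ext i
        change s.indicator (fun i => (w + z) (τ i)) i
          = s.indicator (fun i => w (τ i)) i + s.indicator (fun i => z (τ i)) i
        by_cases hi : i ∈ s <;> simp [hi]
      map_smul' := fun c w => by
        ext i
        change s.indicator (fun i => (c • w) (τ i)) i = c • s.indicator (fun i => w (τ i)) i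
        by_cases hi : i ∈ s <;> simp [hi] }
    1 fun w => by
      rw [one_mul]
      exact lp.norm_le_of_forall_sum_le (by norm_num) (norm_nonneg w)
        (lp.sum_indicator_comp_le hτ w)

variable {hτ : s.InjOn τ}

theorem lp.indicatorCompCLM_apply (w : ℓ²(ι, ℂ)) (i : ι) :
    lp.indicatorCompCLM s τ hτ w i = s.indicator (fun i => w (τ i)) i :=
  rfl

theorem lp.indicatorCompCLM_apply_single {i : ι} (hi : i ∈ s) :
    lp.indicatorCompCLM s τ hτ (lp.single 2 (τ i) 1) = lp.single 2 i 1 := by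
  ext k
  rw [lp.indicatorCompCLM_apply]
  by_cases hk : k ∈ s
  · simp only [Set.indicator_of_mem hk, lp.single_apply, Pi.single_apply, hτ.eq_iff hk hi]
  · rw [Set.indicator_of_notMem hk, lp.single_apply, Pi.single_apply,
      if_neg (ne_of_mem_of_not_mem hi hk).symm]

theorem lp.mem_of_indicatorCompCLM_apply_single_ne_zero {i j : ι}
    (h : lp.indicatorCompCLM s τ hτ (lp.single 2 j 1) i ≠ 0) : i ∈ s ∧ τ i = j := by
  rw [lp.indicatorCompCLM_apply] at h
  by_cases hi : i ∈ s
  · rw [Set.indicator_of_mem hi, lp.single_apply, Pi.single_apply] at h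
    exact ⟨hi, by_contra fun hne => h (if_neg hne)⟩
  · exact absurd (Set.indicator_of_notMem hi _) h

end PartialComposition

theorem ordOf_lt {o : Ordinal} (i : o.ToType) : ordOf i < o :=
  ((Ordinal.ToType.mk (o := o)).symm i).2

theorem ordOf_le_ordOf {o : Ordinal} {i j : o.ToType} : ordOf i ≤ ordOf j ↔ i ≤ j :=
  (Ordinal.ToType.mk (o := o)).symm.le_iff_le

theorem ordOf_injective {o : Ordinal} : Function.Injective (ordOf (o := o)) :=
  Subtype.val_injective.comp (Ordinal.ToType.mk (o := o)).symm.injective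

theorem exists_ordOf_eq {o β : Ordinal} (h : β < o) : ∃ i : o.ToType, ordOf i = β :=
  ⟨Ordinal.ToType.mk ⟨β, h⟩, by simp [ordOf]⟩

theorem mk_ordOf_lt_le {o : Ordinal} (α : Ordinal) :
    #{i : o.ToType // ordOf i < α} ≤ α.card := by
  rw [← Cardinal.mk_toType α]
  refine Cardinal.mk_le_of_injective (f := fun i => Ordinal.ToType.mk ⟨ordOf i.1, i.2⟩) ?_
  intro i j hij
  simpa [ordOf_injective.eq_iff, Subtype.ext_iff] using hij

theorem Cardinal.IsRegular.le_mk_of_forall_exists_le {κ : Cardinal} (hreg : κ.IsRegular)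
    {B : Set κ.ord.ToType} (hB : ∀ β < κ.ord, ∃ k ∈ B, β ≤ ordOf k) : κ ≤ #B := by
  have hcof : IsCofinal B := fun a => by
    obtain ⟨k, hk, hle⟩ := hB _ (ordOf_lt a)
    exact ⟨k, hk, ordOf_le_ordOf.1 hle⟩
  simpa [hreg.cof_ord] using Order.cof_le hcof

section Club

variable {o α β δ δ' ξ η : Ordinal} {C : Set Ordinal}

theorem clubSucc_le (hβ : β ∈ C) (h : δ < β) : clubSucc C δ ≤ β :=
  csInf_le' ⟨hβ, h⟩

theorem IsClubIn.clubSucc_mem_and_lt (hC : IsClubIn o C) (hδ : δ < o) :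
    clubSucc C δ ∈ C ∧ δ < clubSucc C δ :=
  csInf_mem (hC.2.2 δ hδ)

theorem IsClubIn.clubSucc_lt (hC : IsClubIn o C) (hδ : δ < o) : clubSucc C δ < o :=
  hC.1 (hC.clubSucc_mem_and_lt hδ).1

theorem lt_iff_lt_of_mem_Ico_clubSucc (hα : α ∈ C) (hξ : ξ ∈ Ico δ (clubSucc C δ))
    (hη : η ∈ Ico δ (clubSucc C δ)) : ξ < α ↔ η < α := by
  rcases le_or_gt α δ with h | h
  · exact iff_of_false (hξ.1.trans' h).not_gt (hη.1.trans' h).not_gt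
  · exact iff_of_true (hξ.2.trans_le (clubSucc_le hα h)) (hη.2.trans_le (clubSucc_le hα h))

theorem eq_of_mem_Ico_clubSucc (hδ : δ ∈ C) (hδ' : δ' ∈ C) (h : ξ ∈ Ico δ (clubSucc C δ))
    (h' : ξ ∈ Ico δ' (clubSucc C δ')) : δ = δ' :=
  le_antisymm (not_lt.1 fun hlt => (h'.2.trans_le ((clubSucc_le hδ hlt).trans h.1)).false)
    (not_lt.1 fun hlt => (h.2.trans_le ((clubSucc_le hδ' hlt).trans h'.1)).false)

theorem IsClubIn.exists_mem_Ico_clubSucc (hC : IsClubIn o C) (hβ : β < o) (hα : α ∈ C)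
    (hαβ : α ≤ β) : ∃ δ ∈ C, α ≤ δ ∧ β ∈ Ico δ (clubSucc C δ) := by
  have hne : (C ∩ Iic β).Nonempty := ⟨α, hα, hαβ⟩
  have hbdd : BddAbove (C ∩ Iic β) := ⟨β, fun _ h => h.2⟩
  have hδβ : sSup (C ∩ Iic β) ≤ β := csSup_le hne fun _ h => h.2
  have hδC : sSup (C ∩ Iic β) ∈ C := hC.2.1 _ inter_subset_left hne (hδβ.trans_lt hβ)
  obtain ⟨hsuccC, hlt⟩ := hC.clubSucc_mem_and_lt (hδβ.trans_lt hβ)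
  refine ⟨_, hδC, le_csSup hbdd ⟨hα, hαβ⟩, hδβ, not_le.1 fun hle => ?_⟩
  exact hlt.not_ge (le_csSup hbdd ⟨hsuccC, hle⟩)

theorem injective_of_ordOf_mem_Ico_clubSucc {B : Set o.ToType} (hB : ∀ k : B, ordOf k.1 ∈ C)
    {r : B → o.ToType} (hr : ∀ k, ordOf (r k) ∈ Ico (ordOf k.1) (clubSucc C (ordOf k.1))) :
    Function.Injective r := fun k k' h =>
  Subtype.ext <| ordOf_injective <| eq_of_mem_Ico_clubSucc (hB k) (hB k') (hr k) (h ▸ hr k')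

theorem IsClubIn.exists_ordOf_mem_Ico_clubSucc_ne {X : Type*} {φ : Ordinal → X}
    (hC : IsClubIn o C) (hδ : δ ∈ C) (h : ¬ConstOn φ δ (clubSucc C δ)) :
    ∃ i j : o.ToType, ordOf i ∈ Ico δ (clubSucc C δ) ∧ ordOf j ∈ Ico δ (clubSucc C δ) ∧
      φ (ordOf i) ≠ φ (ordOf j) := by
  simp only [ConstOn, not_forall] at h
  obtain ⟨ξ, η, hξ, hξ', hη, hη', hne⟩ := h
  have hlt := hC.clubSucc_lt (hC.1 hδ)
  obtain ⟨i, rfl⟩ := exists_ordOf_eq (hξ'.trans hlt)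
  obtain ⟨j, rfl⟩ := exists_ordOf_eq (hη'.trans hlt)
  exact ⟨i, j, ⟨hξ, hξ'⟩, ⟨hη, hη'⟩, hne⟩

end Club

theorem invOn_iff {o : Ordinal} {S : Set Ordinal} {x : Bd o} :
    InvOn o S x ↔ ∀ i j, ordOf j ∈ S → ordOf i ∉ S → x (lp.single 2 j 1) i = 0 := by
  refine ⟨fun hx i j hj hi => hx _ (fun k hk => ?_) i hi, fun hx w hw i hi =>
    lp.apply_eq_zero_of_apply_single x w i fun j hj => hx i j (not_imp_comm.1 (hw j) hj) hi⟩
  rw [lp.single_apply, Pi.single_apply, if_neg]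
  rintro rfl
  exact hk hj

theorem mem_Dclub_iff {o : Ordinal} {C : Set Ordinal} {x : Bd o} :
    x ∈ Dclub o C ↔
      ∀ i j, x (lp.single 2 j 1) i ≠ 0 → ∀ α ∈ C, (ordOf i < α ↔ ordOf j < α) := by
  simp only [Dclub, mem_ofPred_eq, invOn_iff, lp.star_apply_single, map_eq_zero, mem_Iio]
  constructor
  · intro hx i j hij α hα
    by_cases hi : ordOf i < α <;> by_cases hj : ordOf j < α
    · exact iff_of_true hi hj
    · exact absurd ((hx α hα).2 j i hi hj) hij
    · exact absurd ((hx α hα).1 i j hj hi) hij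
    · exact iff_of_false hi hj
  · intro hx α hα
    constructor <;> intro i j hj hi <;> by_contra hne
    · exact hi ((hx _ _ hne α hα).2 hj)
    · exact hi ((hx _ _ hne α hα).1 hj)

theorem ordOf_mem_Ico_of_mem_Dclub {o δ : Ordinal} {C : Set Ordinal} {x : Bd o} {i j : o.ToType}
    (hx : x ∈ Dclub o C) (hij : x (lp.single 2 j 1) i ≠ 0) (hδ : δ ∈ C)
    (hsucc : clubSucc C δ ∈ C) (hi : ordOf i ∈ Ico δ (clubSucc C δ)) :
    ordOf j ∈ Ico δ (clubSucc C δ) :=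
  ⟨not_lt.1 fun h => hi.1.not_gt ((mem_Dclub_iff.1 hx i j hij δ hδ).2 h),
    (mem_Dclub_iff.1 hx i j hij _ hsucc).1 hi.2⟩

theorem exists_mem_Dclub_apply_single_eq {o : Ordinal} {C : Set Ordinal} {S : Type*}
    {p q : S → o.ToType} (hp : Function.Injective p) (hq : Function.Injective q)
    (hpq : ∀ k, ∀ α ∈ C, (ordOf (p k) < α ↔ ordOf (q k) < α)) :
    ∃ x ∈ Dclub o C, ∀ k, x (lp.single 2 (q k) 1) = lp.single 2 (p k) 1 := by
  set τ := Function.extend p q id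
  have hτ : ∀ k, τ (p k) = q k := fun k => hp.extend_apply q id k
  have hτinj : (range p).InjOn τ := by
    rintro _ ⟨k, rfl⟩ _ ⟨k', rfl⟩ h
    rw [hτ, hτ] at h
    rw [hq h]
  refine ⟨lp.indicatorCompCLM (range p) τ hτinj, mem_Dclub_iff.2 fun i j hij α hα => ?_,
    fun k => hτ k ▸ lp.indicatorCompCLM_apply_single ⟨k, rfl⟩⟩
  obtain ⟨⟨k, rfl⟩, rfl⟩ := lp.mem_of_indicatorCompCLM_apply_single_ne_zero hij
  rw [hτ]
  exact hpq k α hα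

theorem mk_lt_of_memJ {o : Ordinal} {κ : Cardinal} {T : Bd o} {S : Type}
    {p : S → o.ToType} (hT : memJ κ T) (hp : Function.Injective p)
    (hrange : ∀ k, lp.single 2 (p k) 1 ∈ range T) : #S < κ := by
  obtain ⟨D, hD, hTD⟩ := hT
  exact (Cardinal.mk_le_of_separated_subset_closure one_pos (fun k => hTD (hrange k))
    fun k k' hne => lp.one_le_dist_single (hp.ne hne)).trans_lt hD

section KeyLemma

variable {κ : Cardinal.{0}} {C : Set Ordinal} {f g : Ordinal → ℂ} {u v : Bd κ.ord}

theorem memJ_conj_sub_conj_of_eventually_constOn (hunc : ℵ₀ < κ)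
    (hC : IsClubIn κ.ord C) (hf : ∀ ξ, ‖f ξ‖ = 1) (hg : ∀ ξ, ‖g ξ‖ = 1)
    (hu : ∀ (w : L2 κ.ord) (i : κ.ord.ToType), u w i = f (ordOf i) * w i)
    (hv : ∀ (w : L2 κ.ord) (i : κ.ord.ToType), v w i = g (ordOf i) * w i)
    {ε : Ordinal} (hε : ε < κ.ord)
    (hconst : ∀ δ ∈ C, ε ≤ δ → ConstOn (fun ξ => f ξ * star (g ξ)) δ (clubSucc C δ))
    {x : Bd κ.ord} (hx : x ∈ Dclub κ.ord C) : memJ κ (u * x * star u - v * x * star v) := by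
  obtain ⟨hε'C, hεε'⟩ := hC.clubSucc_mem_and_lt hε
  obtain ⟨D, hDcard, hD⟩ :=
    lp.exists_mk_le_subset_closure {i : κ.ord.ToType | ordOf i < clubSucc C ε}
  refine ⟨D, hDcard.trans_lt (max_lt hunc ((mk_ordOf_lt_le _).trans_lt
    (Cardinal.lt_ord.1 (hC.clubSucc_lt hε)))), ?_⟩
  rintro _ ⟨w, rfl⟩
  refine hD fun i hi => lp.apply_eq_zero_of_apply_single _ _ _ fun j _ => ?_
  obtain ⟨δ, hδC, hε'δ, hiδ⟩ := hC.exists_mem_Ico_clubSucc (ordOf_lt i) hε'C (not_lt.1 hi)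
  rw [lp.conj_diag_sub_conj_diag_apply_single hu hv]
  by_cases hij : x (lp.single 2 j 1) i = 0
  · rw [hij, mul_zero]
  have hj := ordOf_mem_Ico_of_mem_Dclub hx hij hδC (hC.clubSucc_mem_and_lt (hC.1 hδC)).1 hiδ
  refine mul_eq_zero_of_left (sub_eq_zero.2 ?_) _
  refine (Complex.mul_conj_eq_mul_conj_iff (hf _) (hg _) (hg _)).2 ?_
  exact hconst δ hδC (hεε'.le.trans hε'δ) _ _ hiδ.1 hiδ.2 hj.1 hj.2

theorem exists_eventually_constOn_of_forall_memJ (hreg : κ.IsRegular) (hC : IsClubIn κ.ord C)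
    (hf : ∀ ξ, ‖f ξ‖ = 1) (hg : ∀ ξ, ‖g ξ‖ = 1)
    (hu : ∀ (w : L2 κ.ord) (i : κ.ord.ToType), u w i = f (ordOf i) * w i)
    (hv : ∀ (w : L2 κ.ord) (i : κ.ord.ToType), v w i = g (ordOf i) * w i)
    (H : ∀ x ∈ Dclub κ.ord C, memJ κ (u * x * star u - v * x * star v)) :
    ∃ ε < κ.ord, ∀ δ ∈ C, ε ≤ δ → ConstOn (fun ξ => f ξ * star (g ξ)) δ (clubSucc C δ) := by
  by_contra hcon
  push Not at hcon
  set B : Set κ.ord.ToType :=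
    {k | ordOf k ∈ C ∧ ¬ConstOn (fun ξ => f ξ * star (g ξ)) (ordOf k) (clubSucc C (ordOf k))}
  have hκB : κ ≤ #B := hreg.le_mk_of_forall_exists_le fun β hβ => by
    obtain ⟨δ, hδC, hle, hδ⟩ := hcon β hβ
    obtain ⟨k, rfl⟩ := exists_ordOf_eq (hC.1 hδC)
    exact ⟨k, ⟨hδC, hδ⟩, hle⟩
  choose p q hp hq hpq using fun k : B => hC.exists_ordOf_mem_Ico_clubSucc_ne k.2.1 k.2.2
  have hpinj := injective_of_ordOf_mem_Ico_clubSucc (fun k => k.2.1) hp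
  obtain ⟨x, hx, hxpq⟩ := exists_mem_Dclub_apply_single_eq hpinj
    (injective_of_ordOf_mem_Ico_clubSucc (fun k => k.2.1) hq)
    fun k α hα => lt_iff_lt_of_mem_Ico_clubSucc hα (hp k) (hq k)
  have hrange : ∀ k, lp.single 2 (p k) 1 ∈ range (u * x * star u - v * x * star v) := by
    intro k
    set c := f (ordOf (p k)) * conj (f (ordOf (q k))) - g (ordOf (p k)) * conj (g (ordOf (q k)))
    have hc : c ≠ 0 := fun h0 => hpq k <|
      (Complex.mul_conj_eq_mul_conj_iff (hf _) (hg _) (hg _)).1 (sub_eq_zero.1 h0)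
    refine ⟨c⁻¹ • lp.single 2 (q k) 1, ?_⟩
    rw [map_smul, lp.conj_diag_sub_conj_diag_single_of_apply_single hu hv (hxpq k), smul_smul,
      inv_mul_cancel₀ hc, one_smul]
  exact (hκB.trans_lt (mk_lt_of_memJ (H x hx) hpinj hrange)).false

end KeyLemma

/-- **Lemma (key).** Let κ be regular uncountable, `C` a club in κ, and let `u`, `v` be the
diagonal unitaries on ℓ²(κ) with diagonals `f, g : κ → 𝕋`.  Then `Ad u` and `Ad v` agree on
`D[C]` modulo J_κ if and only if `f ⬝ conj g` is eventually constant on the intervals of `C`. -/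
theorem key_lemma (κ : Cardinal.{0}) (hreg : κ.IsRegular) (hunc : Cardinal.aleph0 < κ)
    (C : Set Ordinal) (hC : IsClubIn κ.ord C)
    (f g : Ordinal → ℂ)
    (hf : ∀ ξ : Ordinal, ‖f ξ‖ = 1) (hg : ∀ ξ : Ordinal, ‖g ξ‖ = 1)
    (u v : Bd κ.ord)
    (hu : ∀ (w : L2 κ.ord) (i : κ.ord.ToType), u w i = f (ordOf i) * w i)
    (hv : ∀ (w : L2 κ.ord) (i : κ.ord.ToType), v w i = g (ordOf i) * w i) :
    (∀ x ∈ Dclub κ.ord C, memJ κ (u * x * star u - v * x * star v)) ↔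
      (∃ ε < κ.ord, ∀ δ ∈ C, ε ≤ δ →
        ConstOn (fun ξ => f ξ * star (g ξ)) δ (clubSucc C δ)) :=
  ⟨exists_eventually_constOn_of_forall_memJ hreg hC hf hg hu hv,
    fun ⟨_, hε, hconst⟩ _ hx =>
      memJ_conj_sub_conj_of_eventually_constOn hunc hC hf hg hu hv hε hconst hx⟩
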